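/- arXiv:2203.14377 — 4 statements merged into one kernel-verified Lean document; each statement's English description precedes it below -/
import Mathlib

section
/- Let n ≥ 2 and let E = diag(e₁,…,eₙ) ∈ ℝ^{n×n} be diagonal positive definite, partitioned as E = blockdiag(Ē, eₙ) with Ē = diag(e₁,…,e_{n−1}). Define Sₙ ∈ ℝ^{n×(n−1)} as the block matrix with −I_{n−1} on top of the row 1_{n−1}ᵀ, and Sₙᴸ := (Sₙᵀ E^{−1} Sₙ)^{−1} Sₙᵀ E^{−1} ∈ ℝ^{(n−1)×n}. Then trace(E)·Sₙᴸ = [ Ē 1_{n−1} 1_{n−1}ᵀ − trace(E)·I_{n−1} , Ē 1_{n−1} ], i.e., the first n−1 columns of trace(E)·Sₙᴸ equal Ē 1_{n−1} 1_{n−1}ᵀ − trace(E)·I_{n−1} and the last column equals Ē 1_{n−1}. (Proposition 1, equation (29).) -/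
open Matrix

/-- The all-ones column vector of length `k`, as a `k × 1` matrix. -/
def onesCol (k : ℕ) : Matrix (Fin k) (Fin 1) ℝ := Matrix.of fun _ _ => 1

/-- The matrix `Sₙ = [−I_{n−1}; 1_{n−1}ᵀ] ∈ ℝ^{n×(n−1)}`, with `n = m + 1`. -/
def Sn (m : ℕ) : Matrix (Fin (m + 1)) (Fin m) ℝ :=
  Matrix.of fun i j => if (i : ℕ) = m then 1 else if (i : ℕ) = (j : ℕ) then -1 else 0

/-- The weighted left inverse `Sₙᴸ = (Sₙᵀ E⁻¹ Sₙ)⁻¹ Sₙᵀ E⁻¹`. -/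
noncomputable def SnL (m : ℕ) (E : Matrix (Fin (m + 1)) (Fin (m + 1)) ℝ) :
    Matrix (Fin m) (Fin (m + 1)) ℝ :=
  ((Sn m)ᵀ * E⁻¹ * Sn m)⁻¹ * (Sn m)ᵀ * E⁻¹

/-- The upper-left `(n−1)×(n−1)` block `Ē` of `E`. -/
def Ebar (m : ℕ) (E : Matrix (Fin (m + 1)) (Fin (m + 1)) ℝ) : Matrix (Fin m) (Fin m) ℝ :=
  E.submatrix Fin.castSucc Fin.castSucc

/-!
For diagonal `E` both column blocks of the right-hand side are given by one formula,
`R = scaledSnL m E`. With `A = Sₙᵀ E⁻¹ Sₙ` one computes `Sₙ R = trace(E) • I - d 1ᵀ`, where `d` is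
the diagonal of `E`. As `E⁻¹ d = 1` and the columns of `Sₙ` sum to zero, this gives `A R = trace(E) • Sₙᵀ E⁻¹`. Since `Sₙ` has full column rank, `A` is
positive definite, hence invertible, and `trace(E) • Sₙᴸ = A⁻¹ (A R) = R`.
-/

lemma Matrix.IsDiag.nonsing_inv_mulVec_diag {n R : Type*} [Fintype n] [DecidableEq n]
    [CommRing R] {A : Matrix n n R} (hA : A.IsDiag) (hdet : IsUnit A.det) :
    A⁻¹ *ᵥ A.diag = 1 := by
  have hdiag : A.diag = A *ᵥ 1 := by
    ext i
    conv_rhs => rw [← hA.diagonal_diag]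
    rw [mulVec_diagonal, Pi.one_apply, mul_one]
  rw [hdiag, mulVec_mulVec, nonsing_inv_mul _ hdet, one_mulVec]

section

variable {m : ℕ}

lemma Sn_castSucc_apply (i j : Fin m) :
    Sn m i.castSucc j = -(1 : Matrix (Fin m) (Fin m) ℝ) i j := by
  simp only [Sn, of_apply, Fin.val_castSucc, i.is_lt.ne, if_false, Fin.val_eq_val, one_apply]
  split_ifs <;> simp

lemma Sn_last_apply (j : Fin m) : Sn m (Fin.last m) j = 1 := by
  simp [Sn]

lemma Sn_mul_apply_castSucc {ι : Type*} (N : Matrix (Fin m) ι ℝ) (i : Fin m) (j : ι) :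
    (Sn m * N) i.castSucc j = -N i j := by
  simp [mul_apply, Sn_castSucc_apply, one_apply]

lemma Sn_mul_apply_last {ι : Type*} (N : Matrix (Fin m) ι ℝ) (j : ι) :
    (Sn m * N) (Fin.last m) j = ∑ q, N q j := by
  simp [mul_apply, Sn_last_apply]

lemma Sn_transpose_mulVec_one : (Sn m)ᵀ *ᵥ 1 = 0 := by
  ext j
  simp [mulVec, dotProduct, Fin.sum_univ_castSucc, Sn_castSucc_apply, Sn_last_apply, one_apply]

lemma Sn_mulVec_injective : Function.Injective (Sn m).mulVec := by
  intro v w h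
  ext i
  simpa [mulVec, dotProduct, Sn_castSucc_apply, one_apply] using congrFun h i.castSucc

lemma posDef_Sn_transpose_mul_mul_Sn {W : Matrix (Fin (m + 1)) (Fin (m + 1)) ℝ}
    (hW : W.PosDef) : ((Sn m)ᵀ * W * Sn m).PosDef := by
  simpa using hW.conjTranspose_mul_mul_same Sn_mulVec_injective

def scaledSnL (m : ℕ) (E : Matrix (Fin (m + 1)) (Fin (m + 1)) ℝ) :
    Matrix (Fin m) (Fin (m + 1)) ℝ :=
  of fun i j => E i.castSucc i.castSucc - if j = i.castSucc then E.trace else 0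

variable {E : Matrix (Fin (m + 1)) (Fin (m + 1)) ℝ}

lemma Ebar_mul_onesCol_of_isDiag (hE : E.IsDiag) (i : Fin m) :
    (Ebar m E * onesCol m) i 0 = E i.castSucc i.castSucc := by
  simp only [mul_apply, Ebar, onesCol, submatrix_apply, of_apply, mul_one]
  exact Fintype.sum_eq_single i fun k hk => hE (Fin.castSucc_injective m |>.ne (Ne.symm hk))

lemma blocks_eq_scaledSnL (hE : E.IsDiag) :
    (of fun (i : Fin m) (j : Fin (m + 1)) =>
        if h : (j : ℕ) < m then
          (Ebar m E * onesCol m * (onesCol m)ᵀ - E.trace • (1 : Matrix (Fin m) (Fin m) ℝ))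
            i ⟨(j : ℕ), h⟩
        else (Ebar m E * onesCol m) i 0) =
      scaledSnL m E := by
  ext i j
  rcases Fin.eq_castSucc_or_eq_last j with ⟨j, rfl⟩ | rfl
  · rw [of_apply, dif_pos (show (j.castSucc : ℕ) < m from j.is_lt), Matrix.sub_apply, mul_apply,
      Fin.sum_univ_one, Ebar_mul_onesCol_of_isDiag hE]
    simp [scaledSnL, onesCol, one_apply, eq_comm]
  · simp [scaledSnL, Ebar_mul_onesCol_of_isDiag hE, (Fin.castSucc_ne_last i).symm]

lemma Sn_mul_scaledSnL (E : Matrix (Fin (m + 1)) (Fin (m + 1)) ℝ) :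
    Sn m * scaledSnL m E = E.trace • 1 - vecMulVec E.diag 1 := by
  ext i j
  rcases Fin.eq_castSucc_or_eq_last i with ⟨i, rfl⟩ | rfl
  · rw [Sn_mul_apply_castSucc]
    simp [scaledSnL, one_apply, eq_comm]
  · have htrace : E.trace = ∑ q : Fin m, E.diag q.castSucc + E.diag (Fin.last m) :=
      Fin.sum_univ_castSucc _
    rw [Sn_mul_apply_last]
    rcases Fin.eq_castSucc_or_eq_last j with ⟨j, rfl⟩ | rfl
    · simp [scaledSnL, Finset.sum_sub_distrib, htrace, (Fin.castSucc_ne_last j).symm]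
    · simp [scaledSnL, htrace, fun q => (Fin.castSucc_ne_last q).symm]

lemma Sn_transpose_mul_mul_Sn_mul_scaledSnL (hE : E.IsDiag) (hdet : IsUnit E.det) :
    (Sn m)ᵀ * E⁻¹ * Sn m * scaledSnL m E = E.trace • ((Sn m)ᵀ * E⁻¹) :=
  calc (Sn m)ᵀ * E⁻¹ * Sn m * scaledSnL m E
      = (Sn m)ᵀ * (E⁻¹ * (E.trace • 1 - vecMulVec E.diag 1)) := by
        rw [Matrix.mul_assoc, Sn_mul_scaledSnL, Matrix.mul_assoc]
    _ = (Sn m)ᵀ * (E.trace • E⁻¹ - vecMulVec 1 1) := by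
        rw [Matrix.mul_sub, Matrix.mul_smul, Matrix.mul_one, mul_vecMulVec,
          hE.nonsing_inv_mulVec_diag hdet]
    _ = E.trace • ((Sn m)ᵀ * E⁻¹) := by
        rw [Matrix.mul_sub, Matrix.mul_smul, mul_vecMulVec, Sn_transpose_mulVec_one,
          zero_vecMulVec, sub_zero]

end

theorem trace_smul_SnL_general (m : ℕ)
    (E : Matrix (Fin (m + 1)) (Fin (m + 1)) ℝ) (hdiag : E.IsDiag) (hpd : E.PosDef) :
    E.trace • SnL m E =
      Matrix.of fun (i : Fin m) (j : Fin (m + 1)) =>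
        if h : (j : ℕ) < m then
          (Ebar m E * onesCol m * (onesCol m)ᵀ - E.trace • (1 : Matrix (Fin m) (Fin m) ℝ))
            i ⟨(j : ℕ), h⟩
        else (Ebar m E * onesCol m) i 0 := by
  have hdet : IsUnit E.det := (isUnit_iff_isUnit_det E).mp hpd.isUnit
  have hgram : IsUnit ((Sn m)ᵀ * E⁻¹ * Sn m).det :=
    (isUnit_iff_isUnit_det _).mp (posDef_Sn_transpose_mul_mul_Sn hpd.inv).isUnit
  rw [blocks_eq_scaledSnL hdiag, SnL, Matrix.mul_assoc, ← Matrix.mul_smul,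
    ← Sn_transpose_mul_mul_Sn_mul_scaledSnL hdiag hdet]
  exact nonsing_inv_mul_cancel_left _ _ hgram

/-- Proposition 1, equation (29): for diagonal positive definite `E`,
`trace(E)·Sₙᴸ = [ Ē 1 1ᵀ − trace(E) I , Ē 1 ]`. -/
theorem trace_smul_SnL (m : ℕ) (hm : 1 ≤ m)
    (E : Matrix (Fin (m + 1)) (Fin (m + 1)) ℝ) (hdiag : E.IsDiag) (hpd : E.PosDef) :
    E.trace • SnL m E =
      Matrix.of fun (i : Fin m) (j : Fin (m + 1)) =>
        if h : (j : ℕ) < m then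
          (Ebar m E * onesCol m * (onesCol m)ᵀ - E.trace • (1 : Matrix (Fin m) (Fin m) ℝ))
            i ⟨(j : ℕ), h⟩
        else (Ebar m E * onesCol m) i 0 :=
  trace_smul_SnL_general m E hdiag hpd
end

section
/- Let n, r ≥ 2, let E ∈ ℝ^{n×n} and Ê ∈ ℝ^{r×r} be diagonal positive definite, and let L ∈ ℝ^{n×n} and L̂ ∈ ℝ^{r×r} satisfy L 1_n = 0, 1_nᵀ L = 0, L̂ 1_r = 0, and 1_rᵀ L̂ = 0. With Sₙ, Sₙᴸ, S_r, S_rᴸ and the invertible matrix T defined as in the paper (T = [ (1/trace(E))1_n , 0 , E^{−1}Sₙ , 0 ; 0 , (1/trace(Ê))1_r , 0 , Ê^{−1}S_r ], T^{−1} = [ 1_nᵀE , 0 ; 0 , 1_rᵀÊ ; SₙᴸE , 0 ; 0 , S_rᴸÊ ]), let A_e = blockdiag(−E^{−1}L, −Ê^{−1}L̂) ∈ ℝ^{(n+r)×(n+r)}. Then T^{−1} A_e T = blockdiag( 0_{2×2} , Ā_e ), where Ā_e = blockdiag( −Sₙᴸ L E^{−1} Sₙ , −S_rᴸ L̂ Ê^{−1}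 S_r ) ∈ ℝ^{m×m} with m = n + r − 2. -/
open Matrix

/-- The similarity transformation `T` from the proof of Lemma 1 (with `n = a+1`, `r = b+1`). -/
noncomputable def Tmat (a b : ℕ) (E : Matrix (Fin (a + 1)) (Fin (a + 1)) ℝ)
    (Eh : Matrix (Fin (b + 1)) (Fin (b + 1)) ℝ) :
    Matrix (Fin (a + 1) ⊕ Fin (b + 1)) ((Fin 1 ⊕ Fin 1) ⊕ (Fin a ⊕ Fin b)) ℝ :=
  fromBlocks
    (fromCols ((E.trace)⁻¹ • onesCol (a + 1)) 0)
    (fromCols (E⁻¹ * Sn a) 0)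
    (fromCols 0 ((Eh.trace)⁻¹ • onesCol (b + 1)))
    (fromCols 0 (Eh⁻¹ * Sn b))

/-- The inverse `T⁻¹` of the similarity transformation `T`. -/
noncomputable def Tmat' (a b : ℕ) (E : Matrix (Fin (a + 1)) (Fin (a + 1)) ℝ)
    (Eh : Matrix (Fin (b + 1)) (Fin (b + 1)) ℝ) :
    Matrix ((Fin 1 ⊕ Fin 1) ⊕ (Fin a ⊕ Fin b)) (Fin (a + 1) ⊕ Fin (b + 1)) ℝ :=
  fromBlocks
    (fromRows ((onesCol (a + 1))ᵀ * E) 0)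
    (fromRows 0 ((onesCol (b + 1))ᵀ * Eh))
    (fromRows (SnL a E * E) 0)
    (fromRows 0 (SnL b Eh * Eh))

/-!
The rows `1ᵀE` and `1ᵀÊ` of `T⁻¹` are left null vectors of `A_e`, because `1ᵀL = 0` and
`1ᵀL̂ = 0`, and the columns of `T` proportional to `1` are right null vectors, because `L1 = 0`
and `L̂1 = 0`. On the remaining blocks, `SᴸE · E⁻¹L = SᴸL`, which leaves `Ā_e`.
-/

theorem error_state_matrix_block_diagonalization_general (a b : ℕ)
    (E : Matrix (Fin (a + 1)) (Fin (a + 1)) ℝ) (hEpd : E.PosDef)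
    (Eh : Matrix (Fin (b + 1)) (Fin (b + 1)) ℝ) (hEhpd : Eh.PosDef)
    (L : Matrix (Fin (a + 1)) (Fin (a + 1)) ℝ)
    (hL1 : L * onesCol (a + 1) = 0) (h1L : (onesCol (a + 1))ᵀ * L = 0)
    (Lh : Matrix (Fin (b + 1)) (Fin (b + 1)) ℝ)
    (hLh1 : Lh * onesCol (b + 1) = 0) (h1Lh : (onesCol (b + 1))ᵀ * Lh = 0) :
    Tmat' a b E Eh * fromBlocks (-(E⁻¹ * L)) 0 0 (-(Eh⁻¹ * Lh)) * Tmat a b E Eh =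
      fromBlocks 0 0 0
        (fromBlocks (-(SnL a E * L * E⁻¹ * Sn a)) 0 0 (-(SnL b Eh * Lh * Eh⁻¹ * Sn b))) := by
  have hE : IsUnit E.det := hEpd.det_pos.ne'.isUnit
  have hEh : IsUnit Eh.det := hEhpd.det_pos.ne'.isUnit
  have hTinvA : Tmat' a b E Eh * fromBlocks (-(E⁻¹ * L)) 0 0 (-(Eh⁻¹ * Lh)) =
      fromBlocks 0 0 (fromRows (-(SnL a E * L)) 0) (fromRows 0 (-(SnL b Eh * Lh))) := by
    simp only [Tmat', fromBlocks_multiply, fromRows_mul, Matrix.mul_neg, Matrix.mul_assoc,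
      mul_nonsing_inv_cancel_left _ _ hE, mul_nonsing_inv_cancel_left _ _ hEh, h1L, h1Lh,
      Matrix.mul_zero, Matrix.zero_mul, add_zero, zero_add, fromRows_neg, neg_zero, fromRows_zero]
  rw [hTinvA, Tmat, fromBlocks_multiply]
  simp only [fromRows_mul_fromCols, Matrix.neg_mul, Matrix.mul_smul, Matrix.mul_assoc, hL1, hLh1,
    Matrix.mul_zero, Matrix.zero_mul, smul_zero, neg_zero, add_zero, zero_add, fromBlocks_add,
    fromBlocks_zero]

/-- Block-diagonalization of the error state matrix
`A_e = blockdiag(−E⁻¹L, −Ê⁻¹L̂)`: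
`T⁻¹ A_e T = blockdiag(0₂ₓ₂, Ā_e)` with
`Ā_e = blockdiag(−SₙᴸLE⁻¹Sₙ, −SᵣᴸL̂Ê⁻¹Sᵣ)`. -/
theorem error_state_matrix_block_diagonalization (a b : ℕ) (ha : 1 ≤ a) (hb : 1 ≤ b)
    (E : Matrix (Fin (a + 1)) (Fin (a + 1)) ℝ) (hEdiag : E.IsDiag) (hEpd : E.PosDef)
    (Eh : Matrix (Fin (b + 1)) (Fin (b + 1)) ℝ) (hEhdiag : Eh.IsDiag) (hEhpd : Eh.PosDef)
    (L : Matrix (Fin (a + 1)) (Fin (a + 1)) ℝ)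
    (hL1 : L * onesCol (a + 1) = 0) (h1L : (onesCol (a + 1))ᵀ * L = 0)
    (Lh : Matrix (Fin (b + 1)) (Fin (b + 1)) ℝ)
    (hLh1 : Lh * onesCol (b + 1) = 0) (h1Lh : (onesCol (b + 1))ᵀ * Lh = 0) :
    Tmat' a b E Eh * fromBlocks (-(E⁻¹ * L)) 0 0 (-(Eh⁻¹ * Lh)) * Tmat a b E Eh =
      fromBlocks 0 0 0
        (fromBlocks (-(SnL a E * L * E⁻¹ * Sn a)) 0 0 (-(SnL b Eh * Lh * Eh⁻¹ * Sn b))) :=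
  error_state_matrix_block_diagonalization_general a b E hEpd Eh hEhpd L hL1 h1L Lh hLh1 h1Lh
end

section
/- (Theorem 1, LMI form.) Let m, p, q ≥ 1, let Ān, Ār, J ∈ ℝ^{m×m}, B̄n, B̄r ∈ ℝ^{m×p}, C̄n, C̄r ∈ ℝ^{q×m}, define Ā := Ān + JĀr, B̄ := B̄n + JB̄r, C̄ := C̄n + C̄r, and let γ > 0. Then the following are equivalent: (i) there exists a symmetric positive definite X ∈ ℝ^{m×m} such that [[ĀᵀX + XĀ, XB̄, C̄ᵀ], [B̄ᵀX, −γI_p, 0], [C̄, 0, −γI_q]] ≺ 0; (ii) there exist θ̂ > 0 and a symmetric positive definite X̂ ∈ ℝ^{m×m} such that ψ∞(X̂, θ̂γ, θ̂) + φ∞(θ̂) ≺ 0, where γ̂ := θ̂γ, ψ∞(X̂, γ̂, θ̂) := [[ĀnᵀX̂ + X̂Ān, X̂B̄n, θ̂C̄nᵀ, X̂J], [B̄nᵀX̂, −γ̂I_p, 0, 0], [θ̂C̄n, 0, −γ̂I_q, 0], [JᵀX̂, 0, 0, 0]] and φ∞(θ̂) := [[−ĀrᵀĀr, −ĀrᵀB̄r,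 θ̂C̄rᵀ, Ārᵀ], [−B̄rᵀĀr, −B̄rᵀB̄r, 0, B̄rᵀ], [θ̂C̄r, 0, 0, 0], [Ār, B̄r, 0, −I_m]]. Moreover, in (ii) the inequality holds for all sufficiently small θ̂ > 0 once it holds for one. -/
/-!
Write `X̂ = θ̂ X`. Completing the square in the last block variable `z` (a Schur complement with
respect to the `-I_m` block of `φ∞`) gives, for `x = (u, v, w, z)` and `y = (u, v, w)`,
`xᵀ(-(ψ∞ + φ∞))x = θ̂ · yᵀ(-(brl X γ + θ̂ KᵀK))y + ‖z - (θ̂ JᵀX + Ār)u - B̄r v‖²`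
with `K y = JᵀX u`. So the decoupled inequality at `θ̂` is the Bounded Real Lemma inequality
perturbed by the positive semidefinite term `θ̂ KᵀK`. That term only gets smaller as `θ̂`
decreases, and a strict solution of the unperturbed inequality absorbs it for small `θ̂`,
since positive definiteness is an open condition.
-/

open Matrix

variable {m p q : ℕ}

/-- The matrix-valued mapping `ψ∞(X̂, γ̂)` of Theorem 1 in the paper. -/
def psiInf (An : Matrix (Fin m) (Fin m) ℝ) (Bn : Matrix (Fin m) (Fin p) ℝ)
    (Cn : Matrix (Fin q) (Fin m) ℝ) (J X : Matrix (Fin m) (Fin m) ℝ) (th ga : ℝ) :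
    Matrix ((Fin m ⊕ Fin p) ⊕ (Fin q ⊕ Fin m)) ((Fin m ⊕ Fin p) ⊕ (Fin q ⊕ Fin m)) ℝ :=
  fromBlocks
    (fromBlocks (Anᵀ * X + X * An) (X * Bn) (Bnᵀ * X) ((-ga) • 1))
    (fromBlocks (th • Cnᵀ) (X * J) 0 0)
    (fromBlocks (th • Cn) 0 (Jᵀ * X) 0)
    (fromBlocks ((-ga) • 1) 0 0 0)

/-- The matrix-valued mapping `φ∞` of Theorem 1 in the paper. -/
def phiInf (Ar : Matrix (Fin m) (Fin m) ℝ) (Br : Matrix (Fin m) (Fin p) ℝ)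
    (Cr : Matrix (Fin q) (Fin m) ℝ) (th : ℝ) :
    Matrix ((Fin m ⊕ Fin p) ⊕ (Fin q ⊕ Fin m)) ((Fin m ⊕ Fin p) ⊕ (Fin q ⊕ Fin m)) ℝ :=
  fromBlocks
    (fromBlocks (-(Arᵀ * Ar)) (-(Arᵀ * Br)) (-(Brᵀ * Ar)) (-(Brᵀ * Br)))
    (fromBlocks (th • Crᵀ) Arᵀ 0 Brᵀ)
    (fromBlocks (th • Cr) 0 Ar Br)
    (fromBlocks 0 0 0 (-1))

/-- The Bounded Real Lemma block matrix (inequality (8) in the paper). -/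
def brl (A : Matrix (Fin m) (Fin m) ℝ) (B : Matrix (Fin m) (Fin p) ℝ)
    (C : Matrix (Fin q) (Fin m) ℝ) (X : Matrix (Fin m) (Fin m) ℝ) (ga : ℝ) :
    Matrix (Fin m ⊕ (Fin p ⊕ Fin q)) (Fin m ⊕ (Fin p ⊕ Fin q)) ℝ :=
  fromBlocks (Aᵀ * X + X * A) (fromCols (X * B) Cᵀ) (fromRows (Bᵀ * X) C)
    (fromBlocks ((-ga) • 1) 0 0 ((-ga) • 1))

namespace Matrix

variable {ι κ μ : Type*}

theorem posDef_neg_add_smul_of_le {A N : Matrix ι ι ℝ} (hN : N.PosSemidef) {s t : ℝ}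
    (hst : s ≤ t) (h : (-(A + t • N)).PosDef) : (-(A + s • N)).PosDef := by
  convert h.add_posSemidef (hN.smul (sub_nonneg.mpr hst)) using 1
  module

variable [Fintype ι] [Fintype κ] [Fintype μ]

theorem posDef_of_forall_mem_sphere {P : Matrix ι ι ℝ} (hP : P.IsHermitian)
    (h : ∀ x ∈ Metric.sphere (0 : ι → ℝ) 1, 0 < x ⬝ᵥ P *ᵥ x) : P.PosDef := by
  refine PosDef.of_dotProduct_mulVec_pos hP fun x hx => ?_
  have hunit := h (‖x‖⁻¹ • x) (by simpa using norm_smul_inv_norm (𝕜 := ℝ) hx)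
  rw [mulVec_smul, dotProduct_smul, smul_dotProduct, smul_eq_mul, smul_eq_mul] at hunit
  simpa using pos_of_mul_pos_right (pos_of_mul_pos_right hunit (by positivity)) (by positivity)

theorem PosDef.exists_pos_posDef_sub_smul {M : Matrix ι ι ℝ} (hM : M.PosDef)
    {N : Matrix ι ι ℝ} (hN : N.IsHermitian) : ∃ ε : ℝ, 0 < ε ∧ (M - ε • N).PosDef := by
  set f : (ι → ℝ) → ℝ := fun x => x ⬝ᵥ M *ᵥ x / (|x ⬝ᵥ N *ᵥ x| + 1)
  have hf : Continuous f := Continuous.div (by fun_prop) (by fun_prop) fun x => by positivity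
  have hf_pos (x : ι → ℝ) (hx : x ∈ Metric.sphere 0 1) : 0 < f x :=
    div_pos (by simpa using hM.dotProduct_mulVec_pos (ne_zero_of_mem_sphere one_ne_zero ⟨x, hx⟩))
      (by positivity)
  obtain ⟨ε, hε, hεf⟩ := (isCompact_sphere _ _).exists_forall_le' hf.continuousOn hf_pos
  refine ⟨ε, hε, posDef_of_forall_mem_sphere (hM.isHermitian.sub (hN.smul (.all ε)))
    fun x hx => ?_⟩
  have hεx := (le_div_iff₀ (by positivity)).mp (hεf x hx)
  rw [sub_mulVec, dotProduct_sub, smul_mulVec, dotProduct_smul, smul_eq_mul]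
  nlinarith [le_abs_self (x ⬝ᵥ N *ᵥ x)]

theorem posDef_iff_of_dotProduct_mulVec_eq {P : Matrix ι ι ℝ} {R : Matrix κ κ ℝ}
    (hP : P.IsHermitian) (hR : R.IsHermitian) (σ : κ ⊕ μ ≃ ι) (L : Matrix μ κ ℝ) {θ : ℝ}
    (hθ : 0 < θ)
    (h : ∀ y z, (Sum.elim y z ∘ σ.symm) ⬝ᵥ P *ᵥ (Sum.elim y z ∘ σ.symm) =
      θ * (y ⬝ᵥ R *ᵥ y) + (z - L *ᵥ y) ⬝ᵥ (z - L *ᵥ y)) :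
    P.PosDef ↔ R.PosDef := by
  simp only [posDef_iff_dotProduct_mulVec, star_trivial, hP, hR, true_and]
  constructor
  · intro hP_pos y hy
    have hx : Sum.elim y (L *ᵥ y) ∘ σ.symm ≠ 0 := fun h0 =>
      hy (funext fun k => by simpa using congrFun h0 (σ (.inl k)))
    have hxP := hP_pos hx
    rw [h, sub_self, dotProduct_zero, add_zero] at hxP
    exact pos_of_mul_pos_right hxP hθ.le
  · intro hR_pos x hx
    obtain ⟨y, z, rfl⟩ : ∃ y z, x = Sum.elim y z ∘ σ.symm :=
      ⟨x ∘ σ ∘ .inl, x ∘ σ ∘ .inr, by ext i; obtain ⟨j | j, rfl⟩ := σ.surjective i <;> simp⟩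
    rw [h]
    rcases eq_or_ne y 0 with rfl | hy
    · have hz : z ≠ 0 := by rintro rfl; exact hx (by ext; simp)
      simpa using dotProduct_star_self_pos_iff.mpr hz
    · exact add_pos_of_pos_of_nonneg (mul_pos hθ (hR_pos hy))
        (by simpa using dotProduct_star_self_nonneg (z - L *ᵥ y))

end Matrix

def couplingGram (J X : Matrix (Fin m) (Fin m) ℝ) :
    Matrix (Fin m ⊕ (Fin p ⊕ Fin q)) (Fin m ⊕ (Fin p ⊕ Fin q)) ℝ :=
  (fromCols (Jᵀ * X) 0)ᵀ * fromCols (Jᵀ * X) 0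

theorem posSemidef_couplingGram (J X : Matrix (Fin m) (Fin m) ℝ) :
    (couplingGram (p := p) (q := q) J X).PosSemidef := by
  simpa [couplingGram, conjTranspose_eq_transpose_of_trivial] using
    posSemidef_conjTranspose_mul_self (fromCols (Jᵀ * X) (0 : Matrix (Fin m) (Fin p ⊕ Fin q) ℝ))

theorem isHermitian_brl (A : Matrix (Fin m) (Fin m) ℝ) (B : Matrix (Fin m) (Fin p) ℝ)
    (C : Matrix (Fin q) (Fin m) ℝ) {X : Matrix (Fin m) (Fin m) ℝ} (hX : X.IsSymm) (γ : ℝ) :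
    (brl A B C X γ).IsHermitian := by
  rw [isHermitian_iff_isSymm, IsSymm]
  simp [brl, fromBlocks_transpose, transpose_fromCols, transpose_fromRows, hX.eq, add_comm]

section Decoupling

variable {An Ar J X : Matrix (Fin m) (Fin m) ℝ} {Bn Br : Matrix (Fin m) (Fin p) ℝ}
  {Cn Cr : Matrix (Fin q) (Fin m) ℝ}

theorem isHermitian_psiInf_add_phiInf (hX : X.IsSymm) (θ γ : ℝ) :
    (psiInf An Bn Cn J X θ γ + phiInf Ar Br Cr θ).IsHermitian := by
  rw [isHermitian_iff_isSymm, IsSymm]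
  simp [psiInf, phiInf, fromBlocks_transpose, hX.eq, add_comm]

theorem dotProduct_mulVec_neg_psiInf_add_phiInf (hX : X.IsSymm) (θ γ : ℝ)
    (u : Fin m → ℝ) (v : Fin p → ℝ) (w : Fin q → ℝ) (z : Fin m → ℝ) :
    Sum.elim (Sum.elim u v) (Sum.elim w z) ⬝ᵥ
      (-(psiInf An Bn Cn J (θ • X) θ (θ * γ) + phiInf Ar Br Cr θ)) *ᵥ
        Sum.elim (Sum.elim u v) (Sum.elim w z) =
      θ * (Sum.elim u (Sum.elim v w) ⬝ᵥ
        (-(brl (An + J * Ar) (Bn + J * Br) (Cn + Cr) X γ + θ • couplingGram J X)) *ᵥ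
          Sum.elim u (Sum.elim v w)) +
      (z - (θ • (Jᵀ *ᵥ (X *ᵥ u)) + Ar *ᵥ u + Br *ᵥ v)) ⬝ᵥ
        (z - (θ • (Jᵀ *ᵥ (X *ᵥ u)) + Ar *ᵥ u + Br *ᵥ v)) := by
  have hX_comm (a b : Fin m → ℝ) : a ⬝ᵥ X *ᵥ b = b ⬝ᵥ X *ᵥ a := by
    conv_lhs => rw [← hX.eq, dotProduct_transpose_mulVec]
  simp only [psiInf, phiInf, brl, couplingGram, neg_mulVec, neg_add, add_mulVec,
    fromBlocks_mulVec, fromCols_mulVec_sumElim, fromRows_mulVec, sumElim_dotProduct_sumElim,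
    Sum.elim_comp_inl, Sum.elim_comp_inr, Matrix.add_mul, Matrix.mul_add, transpose_add,
    transpose_mul, ← mulVec_mulVec, smul_mulVec, mulVec_smul, mulVec_sub, mulVec_add,
    zero_mulVec, one_mulVec, dotProduct_add, add_dotProduct, dotProduct_sub, sub_dotProduct,
    dotProduct_smul, smul_dotProduct, dotProduct_neg, dotProduct_zero, smul_eq_mul,
    dotProduct_transpose_mulVec, add_zero]
  simp only [dotProduct_comm]
  simp only [dotProduct_transpose_mulVec]
  simp only [hX_comm, dotProduct_comm]
  ring

theorem posDef_neg_psiInf_add_phiInf_iff (hX : X.IsHermitian) {θ : ℝ} (hθ : 0 < θ) (γ : ℝ) :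
    (-(psiInf An Bn Cn J (θ • X) θ (θ * γ) + phiInf Ar Br Cr θ)).PosDef ↔
      (-(brl (An + J * Ar) (Bn + J * Br) (Cn + Cr) X γ + θ • couplingGram J X)).PosDef := by
  rw [isHermitian_iff_isSymm] at hX
  let σ : (Fin m ⊕ (Fin p ⊕ Fin q)) ⊕ Fin m ≃ (Fin m ⊕ Fin p) ⊕ (Fin q ⊕ Fin m) :=
    ((Equiv.sumAssoc _ _ _).symm.sumCongr (Equiv.refl _)).trans (Equiv.sumAssoc _ _ _)
  refine posDef_iff_of_dotProduct_mulVec_eq (isHermitian_psiInf_add_phiInf (hX.smul θ) θ _).neg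
    ((isHermitian_brl _ _ _ hX γ).add ((posSemidef_couplingGram J X).isHermitian.smul
      (.all θ))).neg σ (fromCols (θ • (Jᵀ * X) + Ar) (fromCols Br 0)) hθ fun y z => ?_
  obtain ⟨u, vw, rfl⟩ : ∃ u vw, y = Sum.elim u vw := ⟨_, _, (Sum.elim_comp_inl_inr y).symm⟩
  obtain ⟨v, w, rfl⟩ : ∃ v w, vw = Sum.elim v w := ⟨_, _, (Sum.elim_comp_inl_inr vw).symm⟩
  have hσ : Sum.elim (Sum.elim u (Sum.elim v w)) z ∘ σ.symm =
      Sum.elim (Sum.elim u v) (Sum.elim w z) := by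
    ext ((i | i) | (i | i)) <;> rfl
  rw [hσ, dotProduct_mulVec_neg_psiInf_add_phiInf hX]
  simp [add_mulVec, smul_mulVec, mulVec_mulVec]

variable (An Ar J Bn Br Cn Cr)

theorem exists_posDef_neg_psiInf_add_phiInf_iff {θ : ℝ} (hθ : 0 < θ) (γ : ℝ) :
    (∃ Y : Matrix (Fin m) (Fin m) ℝ, Y.PosDef ∧
        (-(psiInf An Bn Cn J Y θ (θ * γ) + phiInf Ar Br Cr θ)).PosDef) ↔
      ∃ X : Matrix (Fin m) (Fin m) ℝ, X.PosDef ∧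
        (-(brl (An + J * Ar) (Bn + J * Br) (Cn + Cr) X γ + θ • couplingGram J X)).PosDef := by
  constructor
  · rintro ⟨Y, hY, h⟩
    have hθY : θ • θ⁻¹ • Y = Y := by rw [smul_smul, mul_inv_cancel₀ hθ.ne', one_smul]
    have hX := hY.smul (inv_pos.mpr hθ)
    rw [← hθY, posDef_neg_psiInf_add_phiInf_iff hX.isHermitian hθ] at h
    exact ⟨_, hX, h⟩
  · rintro ⟨X, hX, h⟩
    exact ⟨θ • X, hX.smul hθ, (posDef_neg_psiInf_add_phiInf_iff hX.isHermitian hθ γ).mpr h⟩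

end Decoupling

theorem hinf_lmi_decoupling_general (m p q : ℕ)
    (An Ar J : Matrix (Fin m) (Fin m) ℝ) (Bn Br : Matrix (Fin m) (Fin p) ℝ)
    (Cn Cr : Matrix (Fin q) (Fin m) ℝ) (ga : ℝ) :
    ((∃ X : Matrix (Fin m) (Fin m) ℝ, X.PosDef ∧
        (-(brl (An + J * Ar) (Bn + J * Br) (Cn + Cr) X ga)).PosDef) ↔
      (∃ th : ℝ, 0 < th ∧ ∃ X : Matrix (Fin m) (Fin m) ℝ, X.PosDef ∧
        (-(psiInf An Bn Cn J X th (th * ga) + phiInf Ar Br Cr th)).PosDef)) ∧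
    (∀ th₀ : ℝ, 0 < th₀ →
      (∃ X : Matrix (Fin m) (Fin m) ℝ, X.PosDef ∧
        (-(psiInf An Bn Cn J X th₀ (th₀ * ga) + phiInf Ar Br Cr th₀)).PosDef) →
      ∀ th : ℝ, 0 < th → th ≤ th₀ →
        ∃ X : Matrix (Fin m) (Fin m) ℝ, X.PosDef ∧
          (-(psiInf An Bn Cn J X th (th * ga) + phiInf Ar Br Cr th)).PosDef) := by
  have hN (X : Matrix (Fin m) (Fin m) ℝ) := posSemidef_couplingGram (p := p) (q := q) J X
  have hiff {th : ℝ} (hth : 0 < th) :=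
    exists_posDef_neg_psiInf_add_phiInf_iff An Ar J Bn Br Cn Cr hth ga
  refine ⟨⟨fun ⟨X, hX, h⟩ => ?_, fun ⟨th, hth, hY⟩ => ?_⟩, fun th₀ hth₀ hY th hth hle => ?_⟩
  · obtain ⟨th, hth, h⟩ := h.exists_pos_posDef_sub_smul (hN X).isHermitian
    rw [← neg_add'] at h
    exact ⟨th, hth, (hiff hth).mpr ⟨X, hX, h⟩⟩
  · obtain ⟨X, hX, h⟩ := (hiff hth).mp hY
    exact ⟨X, hX, by simpa using posDef_neg_add_smul_of_le (hN X) hth.le h⟩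
  · obtain ⟨X, hX, h⟩ := (hiff hth₀).mp hY
    exact (hiff hth).mpr ⟨X, hX, posDef_neg_add_smul_of_le (hN X) hle h⟩

/-- Theorem 1, LMI form: with `Ā = Ān + JĀr`, `B̄ = B̄n + JB̄r`, `C̄ = C̄n + C̄r`, the Bounded
Real Lemma inequality has a positive definite solution `X` iff there exist `θ̂ > 0` and
positive definite `X̂` with `ψ∞(X̂, θ̂γ, θ̂) + φ∞(θ̂) ≺ 0`; moreover the latter holds for all
smaller positive `θ̂` once it holds for one. -/
theorem hinf_lmi_decoupling (m p q : ℕ) (hm : 1 ≤ m) (hp : 1 ≤ p) (hq : 1 ≤ q)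
    (An Ar J : Matrix (Fin m) (Fin m) ℝ) (Bn Br : Matrix (Fin m) (Fin p) ℝ)
    (Cn Cr : Matrix (Fin q) (Fin m) ℝ) (ga : ℝ) (hga : 0 < ga) :
    ((∃ X : Matrix (Fin m) (Fin m) ℝ, X.PosDef ∧
        (-(brl (An + J * Ar) (Bn + J * Br) (Cn + Cr) X ga)).PosDef) ↔
      (∃ th : ℝ, 0 < th ∧ ∃ X : Matrix (Fin m) (Fin m) ℝ, X.PosDef ∧
        (-(psiInf An Bn Cn J X th (th * ga) + phiInf Ar Br Cr th)).PosDef)) ∧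
    (∀ th₀ : ℝ, 0 < th₀ →
      (∃ X : Matrix (Fin m) (Fin m) ℝ, X.PosDef ∧
        (-(psiInf An Bn Cn J X th₀ (th₀ * ga) + phiInf Ar Br Cr th₀)).PosDef) →
      ∀ th : ℝ, 0 < th → th ≤ th₀ →
        ∃ X : Matrix (Fin m) (Fin m) ℝ, X.PosDef ∧
          (-(psiInf An Bn Cn J X th (th * ga) + phiInf Ar Br Cr th)).PosDef) :=
  hinf_lmi_decoupling_general m p q An Ar J Bn Br Cn Cr ga
end

section
/- (Theorem 3, LMI form.) Let m, p, q ≥ 1, let Ān, Ār, J ∈ ℝ^{m×m}, B̄n, B̄r ∈ ℝ^{m×p}, C̄ ∈ ℝ^{q×m}, define Ā := Ān + JĀr, B̄ := B̄n + JB̄r, and let γ > 0. Then the following are equivalent: (i) there exist a symmetric positive definite X ∈ ℝ^{m×m} and a symmetric R ∈ ℝ^{q×q} such that [[ĀᵀX + XĀ, XB̄], [B̄ᵀX, −I_p]] ≺ 0, [[X, C̄ᵀ], [C̄, R]] ≻ 0, and trace(R) < γ; (ii) there exist θ̂ > 0, a symmetric positive definite X̂ ∈ ℝ^{m×m}, and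 a symmetric R̂ ∈ ℝ^{q×q} such that ψ₂(X̂, θ̂) + φ₂ ≺ 0, [[X̂, θ̂C̄ᵀ], [θ̂C̄, R̂]] ≻ 0, and trace(R̂) < θ̂γ, where ψ₂(X̂, θ̂) := [[ĀnᵀX̂ + X̂Ān, X̂B̄n, X̂J], [B̄nᵀX̂, −θ̂I_p, 0], [JᵀX̂, 0, 0]] and φ₂ := [[−ĀrᵀĀr, −ĀrᵀB̄r, Ārᵀ], [−B̄rᵀĀr, −B̄rᵀB̄r, B̄rᵀ], [Ār, B̄r, −I_m]]. -/
/-!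
Write `A = Aₙ + J Aᵣ`, `B = Bₙ + J Bᵣ` and `M(X, θ) = [[AᵀX + XA, XB], [BᵀX, -θ I]]`.
Eliminating the last block row and column of `ψ₂(X, θ) + φ₂`, whose diagonal block is `-I`,
by a Schur complement shows `-(ψ₂ + φ₂) ≻ 0 ⟺ -(M(X, θ) + diag(XJJᵀX, 0)) ≻ 0`.
Since `M` is jointly homogeneous in `(X, θ)` while `diag(XJJᵀX, 0)` is quadratic in `X`,
the substitution `(X̂, R̂, θ̂) = θ̂ (X, R, 1)` turns `(ii)` into `(i)` after dropping the
positive semidefinite term, and conversely a strict solution of `(i)` absorbs that term once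
`θ̂` is small enough, because positive definiteness is an open condition.
-/

open Matrix

variable {m p q : ℕ}

/-- The matrix-valued mapping `ψ₂(X̂)` of Theorem 3 in the paper. -/
def psiTwo (An : Matrix (Fin m) (Fin m) ℝ) (Bn : Matrix (Fin m) (Fin p) ℝ)
    (J X : Matrix (Fin m) (Fin m) ℝ) (th : ℝ) :
    Matrix (Fin m ⊕ (Fin p ⊕ Fin m)) (Fin m ⊕ (Fin p ⊕ Fin m)) ℝ :=
  fromBlocks (Anᵀ * X + X * An) (fromCols (X * Bn) (X * J))
    (fromRows (Bnᵀ * X) (Jᵀ * X)) (fromBlocks ((-th) • 1) 0 0 0)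

/-- The matrix-valued mapping `φ₂` of Theorem 3 in the paper. -/
def phiTwo (Ar : Matrix (Fin m) (Fin m) ℝ) (Br : Matrix (Fin m) (Fin p) ℝ) :
    Matrix (Fin m ⊕ (Fin p ⊕ Fin m)) (Fin m ⊕ (Fin p ⊕ Fin m)) ℝ :=
  fromBlocks (-(Arᵀ * Ar)) (fromCols (-(Arᵀ * Br)) Arᵀ)
    (fromRows (-(Brᵀ * Ar)) Ar) (fromBlocks (-(Brᵀ * Br)) Brᵀ Br (-1))

open Filter Topology
open scoped ComplexOrder

namespace Matrix

theorem posDef_submatrix_equiv {R m n : Type*} [Ring R] [PartialOrder R] [StarRing R]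
    {M : Matrix n n R} (e : m ≃ n) : (M.submatrix e e).PosDef ↔ M.PosDef :=
  ⟨fun h => by simpa using h.submatrix e.symm.injective, fun h => h.submatrix e.injective⟩

theorem posDef_fromBlocks_one_iff {𝕜 m n : Type*} [RCLike 𝕜] [Fintype m] [Fintype n]
    [DecidableEq m] [DecidableEq n] (A : Matrix m m 𝕜) (B : Matrix m n 𝕜) :
    (fromBlocks A B Bᴴ 1).PosDef ↔ (A - B * Bᴴ).PosDef := by
  let _ : Invertible (1 : Matrix n n 𝕜) := invertibleOne
  have hsemi := PosDef.fromBlocks₂₂ A B (PosDef.one (n := n) (R := 𝕜))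
  rw [inv_one, Matrix.mul_one] at hsemi
  have hdet : (fromBlocks A B Bᴴ 1).det = (A - B * Bᴴ).det := det_fromBlocks_one₂₂ A B Bᴴ
  constructor
  · intro h
    exact ((hsemi.mp h.posSemidef).posDef_iff_det_ne_zero).mpr (hdet ▸ h.det_pos.ne')
  · intro h
    exact ((hsemi.mpr h.posSemidef).posDef_iff_det_ne_zero).mpr (hdet ▸ h.det_pos.ne')

theorem fromBlocks_submatrix_sumAssoc {α l n k : Type*} (P : Matrix l l α)
    (Q₁ : Matrix l n α) (Q₂ : Matrix l k α) (R₁ : Matrix n l α) (R₂ : Matrix k l α)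
    (S₁₁ : Matrix n n α) (S₁₂ : Matrix n k α) (S₂₁ : Matrix k n α) (S₂₂ : Matrix k k α) :
    (fromBlocks P (fromCols Q₁ Q₂) (fromRows R₁ R₂) (fromBlocks S₁₁ S₁₂ S₂₁ S₂₂)).submatrix
        (Equiv.sumAssoc l n k) (Equiv.sumAssoc l n k) =
      fromBlocks (fromBlocks P Q₁ R₁ S₁₁) (fromRows Q₂ S₁₂) (fromCols R₂ S₂₁) S₂₂ := by
  ext ((i | i) | i) ((j | j) | j) <;> rfl

/-- The unit sphere of `n → ℝ` is compact, so positivity of the quadratic form on it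
persists under small perturbations. -/
theorem eventually_posDef {X n : Type*} [TopologicalSpace X] [Fintype n]
    {M : X → Matrix n n ℝ} {x₀ : X} (hM : Continuous M) (hherm : ∀ x, (M x).IsHermitian)
    (h₀ : (M x₀).PosDef) : ∀ᶠ x in 𝓝 x₀, (M x).PosDef := by
  have hsphere : ∀ᶠ x in 𝓝 x₀, ∀ y ∈ Metric.sphere (0 : n → ℝ) 1, 0 < y ⬝ᵥ (M x *ᵥ y) := by
    refine (isCompact_sphere _ _).eventually_forall_of_forall_eventually fun y hy => ?_
    have hcont : Continuous fun z : X × (n → ℝ) => z.2 ⬝ᵥ (M z.1 *ᵥ z.2) := by fun_prop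
    have hy₀ : y ≠ 0 := ne_zero_of_mem_unit_sphere ⟨y, hy⟩
    exact continuousAt_const.eventually_lt hcont.continuousAt
      (by simpa using h₀.dotProduct_mulVec_pos hy₀)
  filter_upwards [hsphere] with x hx
  refine .of_dotProduct_mulVec_pos (hherm x) fun v hv => ?_
  have hv' : 0 < ‖v‖ := norm_pos_iff.mpr hv
  have hunit := hx (‖v‖⁻¹ • v) (by simp [norm_smul, hv'.ne'])
  rw [smul_dotProduct, mulVec_smul, dotProduct_smul, smul_eq_mul, smul_eq_mul,
    ← mul_assoc] at hunit
  simpa using pos_of_mul_pos_right hunit (by positivity)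

theorem posSemidef_fromBlocks_mul_transpose_zero {n k l : Type*} [Fintype n] [Fintype k]
    [Fintype l] (Y : Matrix n l ℝ) :
    (fromBlocks (Y * Yᵀ) 0 0 0 : Matrix (n ⊕ k) (n ⊕ k) ℝ).PosSemidef := by
  have h := posSemidef_self_mul_conjTranspose (fromRows Y (0 : Matrix k l ℝ))
  rwa [conjTranspose_eq_transpose_of_trivial, transpose_fromRows, fromRows_mul_fromCols,
    transpose_zero, Matrix.zero_mul, Matrix.mul_zero, Matrix.zero_mul] at h

end Matrix

def h2LmiMatrix {n k : Type*} [Fintype n] [DecidableEq k] (A : Matrix n n ℝ)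
    (B : Matrix n k ℝ) (X : Matrix n n ℝ) (θ : ℝ) : Matrix (n ⊕ k) (n ⊕ k) ℝ :=
  fromBlocks (Aᵀ * X + X * A) (X * B) (Bᵀ * X) ((-θ) • 1)

section H2Lmi

variable {n k : Type*} [Fintype n] [DecidableEq k]

theorem h2LmiMatrix_one (A : Matrix n n ℝ) (B : Matrix n k ℝ) (X : Matrix n n ℝ) :
    h2LmiMatrix A B X 1 = fromBlocks (Aᵀ * X + X * A) (X * B) (Bᵀ * X) (-1) := by
  simp [h2LmiMatrix]

theorem h2LmiMatrix_smul (A : Matrix n n ℝ) (B : Matrix n k ℝ) (X : Matrix n n ℝ)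
    (c θ : ℝ) : h2LmiMatrix A B (c • X) (c * θ) = c • h2LmiMatrix A B X θ := by
  simp [h2LmiMatrix, fromBlocks_smul, smul_add, smul_smul]

/-- The quadratic term is `O(c²)` while the rest scales like `c`, so it is absorbed for
small `c > 0`. -/
theorem exists_pos_posDef_neg_h2LmiMatrix_smul_add {l : Type*} [Fintype k] [Fintype l]
    {A : Matrix n n ℝ} {B : Matrix n k ℝ} {X : Matrix n n ℝ} (J : Matrix n l ℝ)
    (hX : (-h2LmiMatrix A B X 1).PosDef) :
    ∃ c > 0, (-(h2LmiMatrix A B (c • X) c +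
      fromBlocks (c • X * J * (c • X * J)ᵀ) 0 0 0)).PosDef := by
  set D : Matrix (n ⊕ k) (n ⊕ k) ℝ := fromBlocks (X * J * (X * J)ᵀ) 0 0 0
  have hD : D.PosSemidef := posSemidef_fromBlocks_mul_transpose_zero (X * J)
  have hnear : ∀ᶠ c in 𝓝 (0 : ℝ), (-h2LmiMatrix A B X 1 - c • D).PosDef :=
    eventually_posDef (by fun_prop) (fun c => hX.1.sub (hD.1.smul (.all c))) (by simpa using hX)
  obtain ⟨c, hc_pos, hc⟩ :=
    ((hnear.filter_mono (nhdsWithin_le_nhds (s := Set.Ioi 0))).and self_mem_nhdsWithin).exists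
  refine ⟨c, hc, ?_⟩
  have hscale := h2LmiMatrix_smul A B X c 1
  rw [mul_one] at hscale
  convert hc_pos.smul hc using 1
  simp only [hscale, D, Matrix.smul_mul, transpose_smul, Matrix.mul_smul, smul_smul,
    sub_eq_add_neg, neg_add, smul_add, smul_neg, fromBlocks_smul, smul_zero]

end H2Lmi

theorem posDef_neg_psiTwo_add_phiTwo_iff (An Ar J : Matrix (Fin m) (Fin m) ℝ)
    (Bn Br : Matrix (Fin m) (Fin p) ℝ) {X : Matrix (Fin m) (Fin m) ℝ} (hX : X.IsHermitian)
    (θ : ℝ) :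
    (-(psiTwo An Bn J X θ + phiTwo Ar Br)).PosDef ↔
      (-(h2LmiMatrix (An + J * Ar) (Bn + J * Br) X θ +
        fromBlocks (X * J * (X * J)ᵀ) 0 0 0)).PosDef := by
  have hXt : Xᵀ = X := by simpa using hX.eq
  have hblocks : -(psiTwo An Bn J X θ + phiTwo Ar Br) =
      fromBlocks (-(Anᵀ * X + X * An) + Arᵀ * Ar)
        (fromCols (-(X * Bn) + Arᵀ * Br) (-(X * J) - Arᵀ))
        (fromRows (-(Bnᵀ * X) + Brᵀ * Ar) (-(Jᵀ * X) - Ar))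
        (fromBlocks (θ • 1 + Brᵀ * Br) (-Brᵀ) (-Br) 1) := by
    ext (i | i | i) (j | j | j) <;> simp [psiTwo, phiTwo] <;> ring
  set F := fromRows (-(X * J) - Arᵀ) (-Brᵀ)
  have hschur : (-(psiTwo An Bn J X θ + phiTwo Ar Br)).submatrix (Equiv.sumAssoc _ _ _)
      (Equiv.sumAssoc _ _ _) = fromBlocks (-(h2LmiMatrix (An + J * Ar) (Bn + J * Br) X θ +
        fromBlocks (X * J * (X * J)ᵀ) 0 0 0) + F * Fᵀ) F Fᵀ 1 := by
    rw [hblocks, fromBlocks_submatrix_sumAssoc]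
    simp only [F, h2LmiMatrix, transpose_fromRows, fromRows_mul_fromCols, fromBlocks_add,
      fromBlocks_neg, transpose_sub, transpose_neg, transpose_mul, transpose_add, hXt,
      transpose_transpose]
    congr 1
    congr 1 <;> simp only [Matrix.add_mul, Matrix.mul_add, Matrix.sub_mul, Matrix.mul_sub,
      Matrix.neg_mul, Matrix.mul_neg, Matrix.mul_assoc, neg_smul] <;> abel
  rw [← posDef_submatrix_equiv (Equiv.sumAssoc _ _ _), hschur,
    ← conjTranspose_eq_transpose_of_trivial F, posDef_fromBlocks_one_iff, add_sub_cancel_right]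

theorem h2_lmi_decoupling_general (m p q : ℕ)
    (An Ar J : Matrix (Fin m) (Fin m) ℝ) (Bn Br : Matrix (Fin m) (Fin p) ℝ)
    (C : Matrix (Fin q) (Fin m) ℝ) (ga : ℝ) :
    (∃ X : Matrix (Fin m) (Fin m) ℝ, ∃ R : Matrix (Fin q) (Fin q) ℝ,
        X.PosDef ∧ R.IsSymm ∧
        (-(fromBlocks ((An + J * Ar)ᵀ * X + X * (An + J * Ar)) (X * (Bn + J * Br))
            ((Bn + J * Br)ᵀ * X) (-1))).PosDef ∧
        (fromBlocks X Cᵀ C R).PosDef ∧ R.trace < ga) ↔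
    (∃ th : ℝ, 0 < th ∧ ∃ X : Matrix (Fin m) (Fin m) ℝ, ∃ R : Matrix (Fin q) (Fin q) ℝ,
        X.PosDef ∧ R.IsSymm ∧
        (-(psiTwo An Bn J X th + phiTwo Ar Br)).PosDef ∧
        (fromBlocks X (th • Cᵀ) (th • C) R).PosDef ∧ R.trace < th * ga) := by
  constructor
  · rintro ⟨X, R, hX, hR, hLmi, hCR, htr⟩
    rw [← h2LmiMatrix_one] at hLmi
    obtain ⟨c, hc, hcLmi⟩ := exists_pos_posDef_neg_h2LmiMatrix_smul_add J hLmi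
    refine ⟨c, hc, c • X, c • R, hX.smul hc, hR.smul c, ?_, ?_, ?_⟩
    · rwa [posDef_neg_psiTwo_add_phiTwo_iff _ _ _ _ _ (hX.smul hc).1]
    · rw [← fromBlocks_smul]
      exact hCR.smul hc
    · rw [trace_smul, smul_eq_mul]
      exact mul_lt_mul_of_pos_left htr hc
  · rintro ⟨θ, hθ, X, R, hX, hR, hLmi, hCR, htr⟩
    rw [posDef_neg_psiTwo_add_phiTwo_iff _ _ _ _ _ hX.1] at hLmi
    have hθLmi := hLmi.add_posSemidef (posSemidef_fromBlocks_mul_transpose_zero (X * J))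
    rw [neg_add, neg_add_cancel_right] at hθLmi
    have hθ' : 0 < θ⁻¹ := inv_pos.2 hθ
    refine ⟨θ⁻¹ • X, θ⁻¹ • R, hX.smul hθ', hR.smul _, ?_, ?_, ?_⟩
    · have hscale := h2LmiMatrix_smul (An + J * Ar) (Bn + J * Br) X θ⁻¹ θ
      rw [inv_mul_cancel₀ hθ.ne'] at hscale
      rw [← h2LmiMatrix_one, hscale, ← smul_neg]
      exact hθLmi.smul hθ'
    · have hcoupling : fromBlocks (θ⁻¹ • X) Cᵀ C (θ⁻¹ • R) =
          θ⁻¹ • fromBlocks X (θ • Cᵀ) (θ • C) R := by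
        rw [fromBlocks_smul, inv_smul_smul₀ hθ.ne', inv_smul_smul₀ hθ.ne']
      rw [hcoupling]
      exact hCR.smul hθ'
    · rw [trace_smul, smul_eq_mul, inv_mul_lt_iff₀ hθ]
      exact htr

/-- Theorem 3, LMI form: with `Ā = Ān + JĀr` and `B̄ = B̄n + JB̄r`, the standard `H₂`-norm
LMI system `‖C̄(sI − Ā)⁻¹B̄‖²_{H₂} < γ` with positive definite `X` is feasible iff there
exist `θ̂ > 0`, positive definite `X̂`, and symmetric `R̂` with `ψ₂(X̂, θ̂) + φ₂ ≺ 0`,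
`[[X̂, θ̂C̄ᵀ], [θ̂C̄, R̂]] ≻ 0`, and `trace(R̂) < θ̂γ`. -/
theorem h2_lmi_decoupling (m p q : ℕ) (hm : 1 ≤ m) (hp : 1 ≤ p) (hq : 1 ≤ q)
    (An Ar J : Matrix (Fin m) (Fin m) ℝ) (Bn Br : Matrix (Fin m) (Fin p) ℝ)
    (C : Matrix (Fin q) (Fin m) ℝ) (ga : ℝ) (hga : 0 < ga) :
    (∃ X : Matrix (Fin m) (Fin m) ℝ, ∃ R : Matrix (Fin q) (Fin q) ℝ,
        X.PosDef ∧ R.IsSymm ∧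
        (-(fromBlocks ((An + J * Ar)ᵀ * X + X * (An + J * Ar)) (X * (Bn + J * Br))
            ((Bn + J * Br)ᵀ * X) (-1))).PosDef ∧
        (fromBlocks X Cᵀ C R).PosDef ∧ R.trace < ga) ↔
    (∃ th : ℝ, 0 < th ∧ ∃ X : Matrix (Fin m) (Fin m) ℝ, ∃ R : Matrix (Fin q) (Fin q) ℝ,
        X.PosDef ∧ R.IsSymm ∧
        (-(psiTwo An Bn J X th + phiTwo Ar Br)).PosDef ∧
        (fromBlocks X (th • Cᵀ) (th • C) R).PosDef ∧ R.trace < th * ga) :=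
  h2_lmi_decoupling_general m p q An Ar J Bn Br C ga
end
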